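/- Let K be a positive integer and Δx := 2π/K. Let u : ℝ → ℝ^K (indexed by ℤ/Kℤ) be differentiable with derivative u̇, satisfying the average-difference method for the sine-Gordon equation: for all t and all k ∈ ℤ/Kℤ, (u̇_{k+1}(t) − u̇_k(t))/Δx = (sin u_{k+1}(t) + sin u_k(t))/2. Suppose ∑_{k=1}^{K} cos u_k(t) ≠ 0 for all t. Then for all t and all k, u̇_k(t) = (δ_FD^{-1}(sin∘u(t)))_k − [∑_{j=1}^{K} cos u_j(t) · (δ_FD^{-1}(sin∘u(t)))_j] / [∑_{j=1}^{K} cos u_j(t)], where sin∘u(t) denotes the vector (sin u_k(t))_{k}. -/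

import Mathlib

/-!
Summing the scheme over `ℤ/Kℤ` telescopes the left side, so `∑ₖ sin uₖ(t) = 0` for all `t`;
differentiating in `t` gives the constraint `∑ₖ cos uₖ · u̇ₖ = 0`. On the other hand, the scheme
says that `u̇` is a trapezoidal primitive of `sin ∘ u`, so it agrees with `δ_FD⁻¹(sin ∘ u)` up to an
additive constant. The constraint pins that constant down as the `cos u`-weighted mean of
`δ_FD⁻¹(sin ∘ u)`.
-/

open Real Finset

/-- The trapezoidal partial sum `Δx(v₀/2 + ∑_{i=1}^{n−1} vᵢ + vₙ/2)` (with `Δx = 2π/K`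
and periodic indexing, so that `v₀ = v_K`). -/
noncomputable def partialTrap (K : ℕ) (v : ZMod K → ℝ) (n : ℕ) : ℝ :=
  (2 * π / K) * (v 0 / 2 + (∑ i ∈ Finset.Ico 1 n, v (i : ZMod K)) + v (n : ZMod K) / 2)

/-- The trapezoidal antiderivative `δ_FD⁻¹`: for `k = 1,…,K` (periodic indexing),
`(δ_FD⁻¹v)_k = Δx(v₀/2 + ∑_{i=1}^{k−1} vᵢ + v_k/2) −
(Δx²/(2π)) ∑_{i=1}^{K} (v₀/2 + ∑_{j=1}^{i−1} vⱼ + vᵢ/2)`. -/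
noncomputable def deltaFDinv (K : ℕ) (v : ZMod K → ℝ) (k : ZMod K) : ℝ :=
  partialTrap K v (if k.val = 0 then K else k.val) -
    (1 / (2 * π)) * (2 * π / K) * ∑ i ∈ Finset.Icc 1 K, partialTrap K v i

/-- `δ⁺ₓ w = μ⁺ₓ v` on the periodic grid of mesh `2π/K`. -/
def IsTrapezoidalPrimitive (K : ℕ) (v w : ZMod K → ℝ) : Prop :=
  ∀ k, (w (k + 1) - w k) / (2 * π / K) = (v (k + 1) + v k) / 2

namespace IsTrapezoidalPrimitive

variable {K : ℕ} [NeZero K] {v w : ZMod K → ℝ}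

lemma sub_eq (h : IsTrapezoidalPrimitive K v w) (k : ZMod K) :
    w (k + 1) - w k = 2 * π / K * ((v (k + 1) + v k) / 2) := by
  have hK : (K : ℝ) ≠ 0 := Nat.cast_ne_zero.mpr (NeZero.ne K)
  rw [← h k, mul_div_cancel₀ _ (by positivity)]

lemma sum_eq_zero (h : IsTrapezoidalPrimitive K v w) : ∑ k, v k = 0 := by
  have shift : ∀ f : ZMod K → ℝ, ∑ k, f (k + 1) = ∑ k, f k :=
    Equiv.sum_comp (Equiv.addRight 1)
  have hK : (K : ℝ) ≠ 0 := Nat.cast_ne_zero.mpr (NeZero.ne K)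
  have telescope : ∑ k, (w (k + 1) - w k) = 2 * π / K * ∑ k, v k := by
    simp only [h.sub_eq, ← mul_sum, ← sum_div, sum_add_distrib, shift v]
    ring
  rw [sum_sub_distrib, shift w, sub_self] at telescope
  exact (mul_eq_zero.mp telescope.symm).resolve_left (by positivity)

lemma partialTrap_eq (h : IsTrapezoidalPrimitive K v w) {n : ℕ} (hn : 1 ≤ n) :
    partialTrap K v n = w n - w 0 := by
  induction n, hn using Nat.le_induction with
  | base =>
    have step := h.sub_eq 0
    simp only [zero_add] at step
    simp only [partialTrap, Ico_self, sum_empty, Nat.cast_one]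
    linarith
  | succ n hn ih =>
    have step := h.sub_eq n
    simp only [partialTrap] at ih ⊢
    rw [sum_Ico_succ_top hn]
    push_cast at ih step ⊢
    linarith

lemma exists_deltaFDinv_eq_sub_const (h : IsTrapezoidalPrimitive K v w) :
    ∃ C, ∀ k, deltaFDinv K v k = w k - C := by
  refine ⟨w 0 + 1 / (2 * π) * (2 * π / K) * ∑ i ∈ Icc 1 K, partialTrap K v i, fun k => ?_⟩
  have hpartial : partialTrap K v (if k.val = 0 then K else k.val) = w k - w 0 := by
    split_ifs with hk
    · rw [h.partialTrap_eq (Nat.one_le_iff_ne_zero.mpr (NeZero.ne K)), ZMod.natCast_self,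
        (ZMod.val_eq_zero k).mp hk]
    · rw [h.partialTrap_eq (Nat.one_le_iff_ne_zero.mpr hk), ZMod.natCast_zmod_val]
  rw [deltaFDinv, hpartial]
  ring

end IsTrapezoidalPrimitive

lemma eq_sub_weighted_mean_of_eq_sub_const {ι : Type*} [Fintype ι] {c w D : ι → ℝ} {C : ℝ}
    (hD : ∀ j, D j = w j - C) (hw : ∑ j, c j * w j = 0) (hc : ∑ j, c j ≠ 0) (k : ι) :
    w k = D k - (∑ j, c j * D j) / ∑ j, c j := by
  have hmean : ∑ j, c j * D j = -C * ∑ j, c j := by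
    simp only [hD, mul_sub, sum_sub_distrib, hw, ← sum_mul]
    ring
  rw [hmean, mul_div_cancel_right₀ _ hc, hD]
  ring

lemma sum_cos_mul_eq_zero_of_sum_sin_eq_zero {ι : Type*} [Fintype ι] {u : ℝ → ι → ℝ}
    {u' : ι → ℝ} {t : ℝ} (hsin : ∀ s, ∑ k, sin (u s k) = 0)
    (hderiv : ∀ k, HasDerivAt (fun s => u s k) (u' k) t) :
    ∑ k, cos (u t k) * u' k = 0 := by
  have hd : HasDerivAt (fun s => ∑ k, sin (u s k)) (∑ k, cos (u t k) * u' k) t :=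
    HasDerivAt.fun_sum fun k _ => (hderiv k).sin
  rw [funext hsin] at hd
  exact hd.unique (hasDerivAt_const t 0)

/-- A solution of the average-difference method `δ⁺ₓ u̇_k = μ⁺ₓ sin u_k` for the
sine-Gordon equation with `∑_k cos u_k(t) ≠ 0` satisfies the trapezoidal integral form
`u̇_k = (δ_FD⁻¹ sin∘u)_k − (∑_j cos u_j ⬝ (δ_FD⁻¹ sin∘u)_j)/(∑_j cos u_j)`. -/
theorem averageDifference_sineGordon_integral_form (K : ℕ) [NeZero K]
    (u udot : ℝ → ZMod K → ℝ)
    (hderiv : ∀ t : ℝ, ∀ k : ZMod K, HasDerivAt (fun s => u s k) (udot t k) t)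
    (hscheme : ∀ t : ℝ, ∀ k : ZMod K,
      (udot t (k + 1) - udot t k) / (2 * π / K) =
        (Real.sin (u t (k + 1)) + Real.sin (u t k)) / 2)
    (hcos : ∀ t : ℝ, (∑ k : ZMod K, Real.cos (u t k)) ≠ 0) :
    ∀ t : ℝ, ∀ k : ZMod K,
      udot t k = deltaFDinv K (fun j => Real.sin (u t j)) k -
        (∑ j : ZMod K, Real.cos (u t j) * deltaFDinv K (fun i => Real.sin (u t i)) j) /
          (∑ j : ZMod K, Real.cos (u t j)) := by
  have hprimitive : ∀ t, IsTrapezoidalPrimitive K (fun j => sin (u t j)) (udot t) := hscheme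
  intro t
  obtain ⟨C, hC⟩ := (hprimitive t).exists_deltaFDinv_eq_sub_const
  have hconstraint : ∑ k, cos (u t k) * udot t k = 0 :=
    sum_cos_mul_eq_zero_of_sum_sin_eq_zero (fun s => (hprimitive s).sum_eq_zero) (hderiv t)
  exact eq_sub_weighted_mean_of_eq_sub_const hC hconstraint (hcos t)
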